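/- arXiv:1312.4232 — 6 statements merged into one kernel-verified Lean document; each statement's English description precedes it below -/
import Mathlib

section
/- Let C be a covering of a finite set U and M(C) the transversal matroid induced by C. For every x ∈ U, there exists a block K ∈ C such that cl_{M(C)}({x}) ⊆ K. -/
open Set

/-- The rank function of a matroid: the maximum cardinality of an independent subset. -/
noncomputable def mrk {α : Type*} (M : Matroid α) (X : Set α) : ℕ :=
  sSup {n : ℕ | ∃ I ⊆ X, M.Indep I ∧ I.ncard = n}

/-- `M` is the transversal matroid (on ground set `univ`) induced by the family `𝒞` of
subsets: independent sets are exactly the partial transversals of `𝒞`. -/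
def IsTransversalMatroidOf {α : Type*} (M : Matroid α) (𝒞 : Set (Set α)) : Prop :=
  M.E = Set.univ ∧
    ∀ I : Set α, M.Indep I ↔
      ∃ f : α → Set α, Set.InjOn f I ∧ ∀ x ∈ I, f x ∈ 𝒞 ∧ x ∈ f x

/-- A hyperplane of a matroid on ground set `univ`: a flat of rank `r(U) - 1`. -/
def IsHyperplaneOf {α : Type*} (M : Matroid α) (H : Set α) : Prop :=
  M.IsFlat H ∧ mrk M H = mrk M Set.univ - 1

/-! If `y ∈ cl {x}` lay outside a block `K` containing `x`, then `x` and `y` would be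
represented by the distinct blocks `K` and `K' ∋ y`, making `{x, y}` a partial transversal,
i.e. independent, which contradicts `y ∈ cl {x}`. -/

theorem IsTransversalMatroidOf.indep_pair {α : Type*} {M : Matroid α} {𝒞 : Set (Set α)}
    (hM : IsTransversalMatroidOf M 𝒞) {x y : α} {K L : Set α} (hK : K ∈ 𝒞) (hxK : x ∈ K)
    (hL : L ∈ 𝒞) (hyL : y ∈ L) (hKL : K ≠ L) : M.Indep {x, y} := by
  classical
  rw [hM.2]
  refine ⟨fun z ↦ if z = x then K else L, ?_, ?_⟩
  · rintro a (rfl | rfl) b (rfl | rfl) hab <;> grind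
  · rintro z (rfl | rfl) <;> grind

theorem closure_singleton_subset_block_general {α : Type*}
    (𝒞 : Set (Set α)) (hcov : ⋃₀ 𝒞 = Set.univ)
    (M : Matroid α) (hM : IsTransversalMatroidOf M 𝒞) (x : α) :
    ∃ K ∈ 𝒞, M.closure {x} ⊆ K := by
  have mem_block (z : α) : ∃ K ∈ 𝒞, z ∈ K := mem_sUnion.1 (hcov ▸ mem_univ z)
  obtain ⟨K, hK, hxK⟩ := mem_block x
  refine ⟨K, hK, fun y hy ↦ by_contra fun hyK ↦ ?_⟩
  obtain ⟨L, hL, hyL⟩ := mem_block y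
  have hyx : y ≠ x := fun h ↦ hyK (h ▸ hxK)
  have hind : M.Indep {y, x} := hM.indep_pair hL hyL hK hxK (fun h ↦ hyK (h ▸ hyL))
  refine hind.notMem_closure_sdiff_of_mem (mem_insert y {x}) ?_
  rwa [insert_sdiff_self_of_notMem (mt mem_singleton_iff.1 hyx)]

theorem closure_singleton_subset_block {α : Type*} [Fintype α]
    (𝒞 : Set (Set α)) (hne : ∅ ∉ 𝒞) (hcov : ⋃₀ 𝒞 = Set.univ)
    (M : Matroid α) (hM : IsTransversalMatroidOf M 𝒞) (x : α) :
    ∃ K ∈ 𝒞, M.closure {x} ⊆ K :=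
  closure_singleton_subset_block_general 𝒞 hcov M hM x
end

section
/- Let C be a covering of a finite set U and M(C) the transversal matroid induced by C. For every x ∈ U, if |cl_{M(C)}({x})| ≥ 2, then there exists exactly one block K ∈ C with cl_{M(C)}({x}) ⊆ K. -/
open Set

namespace IsTransversalMatroidOf

variable {α : Type*} {𝒞 : Set (Set α)} {M : Matroid α}

lemma indep_pair_s8 (hM : IsTransversalMatroidOf M 𝒞) {a b : α} {K₁ K₂ : Set α} (hab : a ≠ b)
    (hK : K₁ ≠ K₂) (hK₁ : K₁ ∈ 𝒞) (hK₂ : K₂ ∈ 𝒞) (ha : a ∈ K₁) (hb : b ∈ K₂) :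
    M.Indep {a, b} := by
  classical
  refine (hM.2 _).2 ⟨fun w ↦ if w = a then K₁ else K₂, ?_, ?_⟩
  · rintro u (rfl | rfl) v (rfl | rfl) huv <;> simp_all [Ne.symm hab, eq_comm]
  · rintro w (rfl | rfl) <;> simp_all [Ne.symm hab]

/-- `{x, y}` is dependent, so `x` and `y` cannot be represented by distinct blocks. -/
lemma eq_of_mem_closure_singleton (hM : IsTransversalMatroidOf M 𝒞) {x y : α}
    (hy : y ∈ M.closure {x}) (hyx : y ≠ x) {K K' : Set α} (hK : K ∈ 𝒞) (hK' : K' ∈ 𝒞)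
    (hxK : x ∈ K) (hyK' : y ∈ K') : K' = K := by
  by_contra hKK
  have hpair : M.Indep (insert y {x}) := hM.indep_pair_s8 hyx hKK hK' hK hyK' hxK
  exact ((Matroid.insert_indep_iff.1 hpair).2 (by simpa using hyx)).2 hy

lemma closure_singleton_subset (hM : IsTransversalMatroidOf M 𝒞) (hcov : ⋃₀ 𝒞 = univ)
    {x : α} {K : Set α} (hK : K ∈ 𝒞) (hxK : x ∈ K) : M.closure {x} ⊆ K := by
  intro y hy
  obtain rfl | hyx := eq_or_ne y x
  · exact hxK
  obtain ⟨K', hK', hyK'⟩ := mem_sUnion.1 (hcov ▸ mem_univ y)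
  exact hM.eq_of_mem_closure_singleton hy hyx hK hK' hxK hyK' ▸ hyK'

end IsTransversalMatroidOf

theorem closure_singleton_subset_unique_block_general {α : Type*}
    (𝒞 : Set (Set α)) (hcov : ⋃₀ 𝒞 = Set.univ)
    (M : Matroid α) (hM : IsTransversalMatroidOf M 𝒞) (x : α)
    (hcard : 2 ≤ (M.closure {x}).ncard) :
    ∃! K : Set α, K ∈ 𝒞 ∧ M.closure {x} ⊆ K := by
  obtain ⟨K, hK, hxK⟩ := mem_sUnion.1 (hcov ▸ mem_univ x)
  refine ⟨K, ⟨hK, hM.closure_singleton_subset hcov hK hxK⟩, ?_⟩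
  rintro K' ⟨hK', hsub⟩
  obtain ⟨y, hy, hyx⟩ := exists_ne_of_one_lt_ncard hcard x
  exact hM.eq_of_mem_closure_singleton hy hyx hK hK' hxK (hsub hy)

theorem closure_singleton_subset_unique_block {α : Type*} [Fintype α]
    (𝒞 : Set (Set α)) (hne : ∅ ∉ 𝒞) (hcov : ⋃₀ 𝒞 = Set.univ)
    (M : Matroid α) (hM : IsTransversalMatroidOf M 𝒞) (x : α)
    (hcard : 2 ≤ (M.closure {x}).ncard) :
    ∃! K : Set α, K ∈ 𝒞 ∧ M.closure {x} ⊆ K :=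
  closure_singleton_subset_unique_block_general 𝒞 hcov M hM x hcard
end

section
/- Let C = {K_1,...,K_m} be a covering of a finite set U, let A = {K_i − ⋃_{j≠i} K_j : this set is nonempty}, and B = U − ⋃A. Then {cl_{M(C)}({x}) : x ∈ U} = A ∪ {{x} : x ∈ B}, where M(C) is the transversal matroid induced by C. -/
open Set

/-!
Two distinct points `x`, `y` form a partial transversal exactly when they lie in two different
blocks. So a point lying only in the block `K` is parallel precisely to the other points lying
only in `K`, and its closure is `K \ ⋃₀ (𝒞 \ {K})`; a point lying in two blocks can be matched
to a block avoiding any other point, so it is parallel to nothing and its closure is itself.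
-/

namespace Matroid

variable {α : Type*} {M : Matroid α} {x y : α}

lemma mem_closure_singleton_iff_of_ne (hx : M.Indep {x}) (hy : y ∈ M.E) (hyx : y ≠ x) :
    y ∈ M.closure {x} ↔ ¬ M.Indep {y, x} := by
  simp [hx.mem_closure_iff', hy, hyx]

end Matroid

def privatePart {α : Type*} (𝒞 : Set (Set α)) (K : Set α) : Set α :=
  K \ ⋃₀ (𝒞 \ {K})

section Transversal

variable {α : Type*} {𝒞 : Set (Set α)} {M : Matroid α} {K L : Set α} {x y : α}

lemma mem_privatePart_iff : x ∈ privatePart 𝒞 K ↔ x ∈ K ∧ ∀ L ∈ 𝒞, x ∈ L → L = K := by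
  simp only [privatePart, mem_sdiff, mem_sUnion, mem_singleton_iff]
  grind

namespace IsTransversalMatroidOf

variable (hM : IsTransversalMatroidOf M 𝒞)
include hM

lemma indep_singleton (hK : K ∈ 𝒞) (hx : x ∈ K) : M.Indep {x} :=
  (hM.2 _).2 ⟨fun _ => K, injOn_singleton _ _, by simp [hK, hx]⟩

lemma indep_pair_iff (hxy : x ≠ y) :
    M.Indep {x, y} ↔ ∃ K ∈ 𝒞, ∃ L ∈ 𝒞, K ≠ L ∧ x ∈ K ∧ y ∈ L := by
  classical
  rw [hM.2]
  constructor
  · rintro ⟨f, hinj, hf⟩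
    obtain ⟨hfx, hxf⟩ := hf x (by simp)
    obtain ⟨hfy, hyf⟩ := hf y (by simp)
    exact ⟨f x, hfx, f y, hfy, fun h => hxy (hinj (by simp) (by simp) h), hxf, hyf⟩
  · rintro ⟨K, hK, L, hL, hKL, hxK, hyL⟩
    refine ⟨Function.update (fun _ => L) x K, ?_, ?_⟩
    · simp [Function.update, hxy.symm, hKL]
    · simp [Function.update, hxy.symm, hK, hL, hxK, hyL]

lemma not_indep_pair_of_mem_privatePart (hx : x ∈ privatePart 𝒞 K)
    (hy : y ∈ privatePart 𝒞 K) (hxy : x ≠ y) : ¬ M.Indep {x, y} := by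
  rw [hM.indep_pair_iff hxy]
  rintro ⟨K₁, hK₁, K₂, hK₂, hne, hxK₁, hyK₂⟩
  exact hne <| ((mem_privatePart_iff.1 hx).2 K₁ hK₁ hxK₁).trans
    ((mem_privatePart_iff.1 hy).2 K₂ hK₂ hyK₂).symm

variable (hcov : ⋃₀ 𝒞 = univ)
include hcov

lemma closure_singleton_eq_privatePart (hK : K ∈ 𝒞) (hx : x ∈ privatePart 𝒞 K) :
    M.closure {x} = privatePart 𝒞 K := by
  have hxK := (mem_privatePart_iff.1 hx).1
  ext y
  obtain rfl | hyx := eq_or_ne y x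
  · exact iff_of_true (M.mem_closure_self y (hM.1 ▸ mem_univ y)) hx
  rw [Matroid.mem_closure_singleton_iff_of_ne (hM.indep_singleton hK hxK) (hM.1 ▸ mem_univ y) hyx]
  refine ⟨fun hdep => ?_, fun hy => hM.not_indep_pair_of_mem_privatePart hy hx hyx⟩
  obtain ⟨L, hL, hyL⟩ := mem_sUnion.1 (hcov ▸ mem_univ y)
  have hyonly : ∀ L' ∈ 𝒞, y ∈ L' → L' = K := fun L' hL' hyL' =>
    by_contra fun hne => hdep ((hM.indep_pair_iff hyx).2 ⟨L', hL', K, hK, hne, hyL', hxK⟩)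
  exact mem_privatePart_iff.2 ⟨hyonly L hL hyL ▸ hyL, hyonly⟩

lemma closure_singleton_eq_self (hx : ∀ K ∈ 𝒞, x ∉ privatePart 𝒞 K) :
    M.closure {x} = {x} := by
  refine subset_antisymm (fun y hy => ?_) (M.subset_closure {x} (hM.1 ▸ subset_univ _))
  by_contra hyx
  obtain ⟨K, hK, hxK⟩ := mem_sUnion.1 (hcov ▸ mem_univ x)
  obtain ⟨L, hL, hyL⟩ := mem_sUnion.1 (hcov ▸ mem_univ y)
  have hsep : ∃ K' ∈ 𝒞, x ∈ K' ∧ K' ≠ L := by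
    obtain rfl | hKL := eq_or_ne K L
    · simpa [mem_privatePart_iff, hxK] using hx K hK
    · exact ⟨K, hK, hxK, hKL⟩
  obtain ⟨K', hK', hxK', hK'L⟩ := hsep
  rw [Matroid.mem_closure_singleton_iff_of_ne (hM.indep_singleton hK hxK) (hM.1 ▸ mem_univ y) hyx]
    at hy
  exact hy ((hM.indep_pair_iff hyx).2 ⟨L, hL, K', hK', hK'L.symm, hyL, hxK'⟩)

end IsTransversalMatroidOf

end Transversal

theorem closure_singletons_eq_A_union_B_general {α : Type*}
    (𝒞 : Set (Set α)) (hcov : ⋃₀ 𝒞 = Set.univ)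
    (M : Matroid α) (hM : IsTransversalMatroidOf M 𝒞)
    (A : Set (Set α)) (hA : A = {S : Set α | S ≠ ∅ ∧ ∃ K ∈ 𝒞, S = K \ ⋃₀ (𝒞 \ {K})})
    (B : Set α) (hB : B = Set.univ \ ⋃₀ A) :
    {S : Set α | ∃ x : α, S = M.closure {x}} = A ∪ {S : Set α | ∃ x ∈ B, S = {x}} := by
  subst hA hB
  ext S
  constructor
  · rintro ⟨x, rfl⟩
    by_cases h : ∃ K ∈ 𝒞, x ∈ privatePart 𝒞 K
    · obtain ⟨K, hK, hx⟩ := h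
      rw [hM.closure_singleton_eq_privatePart hcov hK hx]
      exact Or.inl ⟨(nonempty_of_mem hx).ne_empty, K, hK, rfl⟩
    · refine Or.inr ⟨x, ⟨mem_univ x, ?_⟩, hM.closure_singleton_eq_self hcov (by simpa using h)⟩
      rintro ⟨-, ⟨-, K, hK, rfl⟩, hx⟩
      exact h ⟨K, hK, hx⟩
  · rintro (⟨hS, K, hK, rfl⟩ | ⟨x, ⟨-, hx⟩, rfl⟩)
    · obtain ⟨x, hx⟩ := nonempty_iff_ne_empty.2 hS
      exact ⟨x, (hM.closure_singleton_eq_privatePart hcov hK hx).symm⟩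
    · refine ⟨x, (hM.closure_singleton_eq_self hcov fun K hK hxK => hx ?_).symm⟩
      exact ⟨_, ⟨(nonempty_of_mem hxK).ne_empty, K, hK, rfl⟩, hxK⟩

theorem closure_singletons_eq_A_union_B {α : Type*} [Fintype α]
    (𝒞 : Set (Set α)) (hne : ∅ ∉ 𝒞) (hcov : ⋃₀ 𝒞 = Set.univ)
    (M : Matroid α) (hM : IsTransversalMatroidOf M 𝒞)
    (A : Set (Set α)) (hA : A = {S : Set α | S ≠ ∅ ∧ ∃ K ∈ 𝒞, S = K \ ⋃₀ (𝒞 \ {K})})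
    (B : Set α) (hB : B = Set.univ \ ⋃₀ A) :
    {S : Set α | ∃ x : α, S = M.closure {x}} = A ∪ {S : Set α | ∃ x ∈ B, S = {x}} :=
  closure_singletons_eq_A_union_B_general 𝒞 hcov M hM A hA B hB
end

section
/- Let C be a covering of a finite set U and define the relation R on U by x R y iff y ∈ cl_{M(C)}({x}), where M(C) is the transversal matroid induced by C. Then R is an equivalence relation on U. -/
open Set

theorem Matroid.closure_singleton_equivalence {α : Type*} (M : Matroid α)
    (h : ∀ e, M.IsNonloop e) : Equivalence (fun x y : α => y ∈ M.closure {x}) where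
  refl x := M.mem_closure_self x (h x).mem_ground
  symm {_ y} hxy := (h y).mem_closure_singleton hxy
  trans {_ y _} hxy hyz := (h y).closure_eq_of_mem_closure hxy ▸ hyz

theorem IsTransversalMatroidOf.isNonloop_of_mem_sUnion {α : Type*} {M : Matroid α}
    {𝒞 : Set (Set α)} (hM : IsTransversalMatroidOf M 𝒞) {x : α} (hx : x ∈ ⋃₀ 𝒞) :
    M.IsNonloop x := by
  obtain ⟨S, hS, hxS⟩ := hx
  rw [← Matroid.indep_singleton, hM.2]
  exact ⟨fun _ ↦ S, injOn_singleton _ _, fun y hy ↦ (mem_singleton_iff.1 hy) ▸ ⟨hS, hxS⟩⟩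

theorem closure_relation_equivalence_general {α : Type*}
    (𝒞 : Set (Set α)) (hcov : ⋃₀ 𝒞 = Set.univ)
    (M : Matroid α) (hM : IsTransversalMatroidOf M 𝒞) :
    Equivalence (fun x y : α => y ∈ M.closure {x}) :=
  M.closure_singleton_equivalence fun x ↦ hM.isNonloop_of_mem_sUnion (hcov ▸ mem_univ x)

theorem closure_relation_equivalence {α : Type*} [Fintype α]
    (𝒞 : Set (Set α)) (hne : ∅ ∉ 𝒞) (hcov : ⋃₀ 𝒞 = Set.univ)
    (M : Matroid α) (hM : IsTransversalMatroidOf M 𝒞) :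
    Equivalence (fun x y : α => y ∈ M.closure {x}) :=
  closure_relation_equivalence_general 𝒞 hcov M hM
end

section
/- Let C be a covering of a finite set U with transversal matroid M(C). If X is a flat of M(C) (i.e., cl_{M(C)}(X) = X), then X = {x ∈ U : cl_{M(C)}({x}) ⊆ X} and X = {x ∈ U : cl_{M(C)}({x}) ∩ X ≠ ∅}. -/
open Set

/-! Since `𝒞` covers the ground set, every singleton is a partial transversal, so `M` has no
loops. In a loopless matroid `y ∈ cl {x}` forces `x ∈ cl {y}` by exchange, so a flat meeting
`cl {x}` contains `x`; the other description of `X` is monotonicity of the closure. -/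

namespace Matroid

variable {α : Type*} {M : Matroid α} {X : Set α} {x : α}

lemma IsFlat.mem_iff_closure_singleton_subset (hX : M.IsFlat X) (hx : x ∈ M.E) :
    x ∈ X ↔ M.closure {x} ⊆ X := by
  refine ⟨fun hxX ↦ ?_, fun h ↦ h (M.mem_closure_self x hx)⟩
  rw [← hX.closure]
  exact M.closure_subset_closure (singleton_subset_iff.2 hxX)

lemma IsFlat.mem_iff_closure_singleton_inter_nonempty [M.Loopless] (hX : M.IsFlat X)
    (hx : x ∈ M.E) : x ∈ X ↔ (M.closure {x} ∩ X).Nonempty := by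
  refine ⟨fun hxX ↦ ⟨x, M.mem_closure_self x hx, hxX⟩, ?_⟩
  rintro ⟨y, hyx, hyX⟩
  have hy : M.IsNonloop y := M.isNonloop_of_loopless (M.closure_subset_ground _ hyx)
  exact (hX.mem_iff_closure_singleton_subset hy.mem_ground).1 hyX (hy.mem_closure_singleton hyx)

end Matroid

lemma IsTransversalMatroidOf.loopless {α : Type*} {M : Matroid α} {𝒞 : Set (Set α)}
    (hM : IsTransversalMatroidOf M 𝒞) (hcov : ⋃₀ 𝒞 = univ) : M.Loopless := by
  refine Matroid.loopless_iff_forall_isNonloop.2 fun y _ ↦ Matroid.indep_singleton.1 ?_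
  obtain ⟨C, hC, hyC⟩ : y ∈ ⋃₀ 𝒞 := hcov ▸ mem_univ y
  refine (hM.2 {y}).2 ⟨fun _ ↦ C, injOn_singleton _ _, ?_⟩
  rintro x rfl
  exact ⟨hC, hyC⟩

theorem flat_fixed_point_general {α : Type*}
    (𝒞 : Set (Set α)) (hcov : ⋃₀ 𝒞 = Set.univ)
    (M : Matroid α) (hM : IsTransversalMatroidOf M 𝒞)
    (X : Set α) (hX : M.IsFlat X) :
    X = {x : α | M.closure {x} ⊆ X} ∧
    X = {x : α | (M.closure {x} ∩ X).Nonempty} := by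
  have := hM.loopless hcov
  have hE : ∀ x, x ∈ M.E := fun x ↦ hM.1 ▸ mem_univ x
  exact ⟨ext fun x ↦ hX.mem_iff_closure_singleton_subset (hE x),
    ext fun x ↦ hX.mem_iff_closure_singleton_inter_nonempty (hE x)⟩

theorem flat_fixed_point {α : Type*} [Fintype α]
    (𝒞 : Set (Set α)) (hne : ∅ ∉ 𝒞) (hcov : ⋃₀ 𝒞 = Set.univ)
    (M : Matroid α) (hM : IsTransversalMatroidOf M 𝒞)
    (X : Set α) (hX : M.IsFlat X) :
    X = {x : α | M.closure {x} ⊆ X} ∧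
    X = {x : α | (M.closure {x} ∩ X).Nonempty} :=
  flat_fixed_point_general 𝒞 hcov M hM X hX
end

section
/- Let (U, A, F, V) be an information system, R₀ the equivalence relation on attributes defined by b R₀ c iff R_{{b}} = R_{{c}}, with quotient A/R₀ = {P₁,...,P_s}. Assume that for all X, Y ⊆ A, R_X = R_Y implies R₀^*(X) = R₀^*(Y). Then B ⊆ A is a reduct of the information system (i.e., R_B = R_A and R_{B−{b}} ≠ R_A for all b ∈ B) if and only if |B ∩ P_i| = 1 for every i = 1,...,s. -/
/-- The indiscernibility relation `R_B` of an information system with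
information functions `f : A → U → V`. -/
def indisc {U A V : Type*} (f : A → U → V) (B : Set A) : Set (U × U) :=
  {p : U × U | ∀ a ∈ B, f a p.1 = f a p.2}

/-- The upper approximation with respect to the relation `R₀` on attributes
(`b R₀ c` iff `R_{b} = R_{c}`). -/
def upR0 {U A V : Type*} (f : A → U → V) (X : Set A) : Set A :=
  {a : A | ∃ b ∈ X, indisc f {a} = indisc f {b}}

theorem reduct_iff_one_from_each_class {U A V : Type*} [Fintype U] [Fintype A]
    (f : A → U → V)
    (h : ∀ X Y : Set A, indisc f X = indisc f Y → upR0 f X = upR0 f Y)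
    (B : Set A) :
    (indisc f B = indisc f Set.univ ∧
      ∀ b ∈ B, indisc f (B \ {b}) ≠ indisc f Set.univ) ↔
    (∀ a : A, (B ∩ {c : A | indisc f {c} = indisc f {a}}).ncard = 1) := by
  have hmono : ∀ X Y : Set A, X ⊆ Y → indisc f Y ⊆ indisc f X := by
    intro X Y hXY p hp a ha
    exact hp a (hXY ha)
  have hsub : ∀ X Y : Set A,
      (∀ b ∈ X, ∃ c ∈ Y, indisc f {b} = indisc f {c}) →
      indisc f Y ⊆ indisc f X := by
    intro X Y hXY p hp b hb
    obtain ⟨c, hc, he⟩ := hXY b hb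
    have hpb : p ∈ indisc f {b} := by
      rw [he]
      intro a ha
      rw [Set.mem_singleton_iff] at ha
      rw [ha]
      exact hp c hc
    exact hpb b rfl
  have hup_univ : upR0 f Set.univ = Set.univ := by
    ext a
    simp only [upR0, Set.mem_setOf_eq, Set.mem_univ, iff_true]
    exact ⟨a, trivial, rfl⟩
  constructor
  · rintro ⟨h1, h2⟩ a
    have hU : upR0 f B = Set.univ := by
      rw [h B Set.univ h1, hup_univ]
    have haB : a ∈ upR0 f B := hU ▸ Set.mem_univ a
    obtain ⟨b, hbB, hba⟩ := haB
    have hbmem : b ∈ B ∩ {c : A | indisc f {c} = indisc f {a}} := ⟨hbB, hba.symm⟩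
    rw [Set.ncard_eq_one]
    refine ⟨b, Set.eq_singleton_iff_unique_mem.mpr ⟨hbmem, ?_⟩⟩
    rintro c ⟨hcB, hca⟩
    by_contra hcb
    -- indisc f (B \ {c}) = indisc f B
    have heq : indisc f (B \ {c}) = indisc f B := by
      apply le_antisymm
      · apply hsub
        intro x hx
        by_cases hxc : x = c
        · subst hxc
          exact ⟨b, ⟨hbB, fun hb' => hcb (hb'.symm)⟩, hca.trans hba⟩
        · exact ⟨x, ⟨hx, hxc⟩, rfl⟩
      · exact hmono _ _ Set.diff_subset
    exact h2 c hcB (heq.trans h1)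
  · intro hc
    have hex : ∀ a : A, ∃ b, B ∩ {c : A | indisc f {c} = indisc f {a}} = {b} := by
      intro a
      exact Set.ncard_eq_one.mp (hc a)
    have h1 : indisc f B = indisc f Set.univ := by
      apply le_antisymm
      · apply hsub
        intro a _
        obtain ⟨b, hb⟩ := hex a
        have hbmem : b ∈ B ∩ {c : A | indisc f {c} = indisc f {a}} := by
          rw [hb]; rfl
        exact ⟨b, hbmem.1, hbmem.2.symm⟩
      · exact hmono _ _ (Set.subset_univ B)
    refine ⟨h1, ?_⟩
    intro b hbB hcon
    have hU : upR0 f (B \ {b}) = Set.univ := by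
      rw [h (B \ {b}) Set.univ hcon, hup_univ]
    have hbmem : b ∈ upR0 f (B \ {b}) := hU ▸ Set.mem_univ b
    obtain ⟨c, hcB, hcb⟩ := hbmem
    obtain ⟨x, hx⟩ := hex b
    have h1' : b ∈ ({x} : Set A) := by
      rw [← hx]; exact ⟨hbB, rfl⟩
    have h2' : c ∈ ({x} : Set A) := by
      rw [← hx]; exact ⟨hcB.1, hcb.symm⟩
    exact hcB.2 (h2'.trans h1'.symm)
end
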